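/- arXiv:0902.4611 — 3 statements merged into one kernel-verified Lean document; each statement's English description precedes it below -/
import Mathlib

section
/- The scalar curvature function s(y_1,y_2,y_3) of the AMWP metric for the STU-model cubic, given explicitly by s = (2 / (3(y_3(y_2+y_3) + y_1(y_2+2y_3))³)) * (16y_1⁶ - 9y_3³(y_2+y_3)³ + 24y_1⁵(y_2+2y_3) - 27y_1y_3²(y_2+y_3)²(y_2+2y_3) + 12y_1⁴(y_2² + 6y_2y_3 + 6y_3²) - 3y_1³(3y_2³ + 10y_2²y_3 + 12y_2y_3² + 8y_3³) - 3y_1²y_3(9y_2³ + 41y_2²y_3 + 64y_2y_3² + 32y_3³)), tends to +∞ as s → ∞ along the curve (y_1, y_2, y_3) = (s², s, s). -/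
/-- The scalar curvature of the AMWP metric for the STU-model cubic, as an explicit
rational function of `(y₁, y₂, y₃)`. -/
noncomputable def stuScalar (y₁ y₂ y₃ : ℝ) : ℝ :=
  (2 / (3 * (y₃ * (y₂ + y₃) + y₁ * (y₂ + 2 * y₃)) ^ 3)) *
    (16 * y₁ ^ 6 - 9 * y₃ ^ 3 * (y₂ + y₃) ^ 3 + 24 * y₁ ^ 5 * (y₂ + 2 * y₃)
      - 27 * y₁ * y₃ ^ 2 * (y₂ + y₃) ^ 2 * (y₂ + 2 * y₃)
      + 12 * y₁ ^ 4 * (y₂ ^ 2 + 6 * y₂ * y₃ + 6 * y₃ ^ 2)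
      - 3 * y₁ ^ 3 * (3 * y₂ ^ 3 + 10 * y₂ ^ 2 * y₃ + 12 * y₂ * y₃ ^ 2 + 8 * y₃ ^ 3)
      - 3 * y₁ ^ 2 * y₃ * (9 * y₂ ^ 3 + 41 * y₂ ^ 2 * y₃ + 64 * y₂ * y₃ ^ 2 + 32 * y₃ ^ 3))

/-!
On the curve `(s², s, s)` the denominator of `stuScalar` is `3 s⁶ (3s + 2)³` and its numerator is
`2 s⁶ (16 s⁶ + …)`, so after cancelling `s⁶` the scalar curvature is a quotient of real polynomials of
degrees 6 and 3 with leading coefficients 32 and 81; such a quotient tends to `+∞`.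
-/

open Polynomial Filter

noncomputable def stuCurveNum : ℝ[X] :=
  2 * (16 * X ^ 6 + 72 * X ^ 5 + 156 * X ^ 4 - 99 * X ^ 3 - 438 * X ^ 2 - 324 * X - 72)

noncomputable def stuCurveDen : ℝ[X] :=
  C 3 * (C 3 * X + C 2) ^ 3

lemma stuScalar_sq_self_self {s : ℝ} (hs : s ≠ 0) :
    stuScalar (s ^ 2) s s = stuCurveNum.eval s / stuCurveDen.eval s := by
  simp only [stuScalar, stuCurveNum, stuCurveDen, eval_mul, eval_add, eval_sub, eval_pow, eval_X,
    eval_C, eval_ofNat]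
  field_simp
  ring

lemma natDegree_stuCurveNum : stuCurveNum.natDegree = 6 := by
  unfold stuCurveNum
  compute_degree!

lemma natDegree_stuCurveDen : stuCurveDen.natDegree = 3 := by
  unfold stuCurveDen
  compute_degree!

lemma leadingCoeff_stuCurveNum : stuCurveNum.leadingCoeff = 32 := by
  rw [leadingCoeff, natDegree_stuCurveNum, stuCurveNum]
  norm_num [coeff_X]

lemma leadingCoeff_stuCurveDen : stuCurveDen.leadingCoeff = 81 := by
  rw [stuCurveDen, leadingCoeff_mul, leadingCoeff_pow, leadingCoeff_C,
    leadingCoeff_linear three_ne_zero]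
  norm_num

/-- the scalar curvature tends to `+∞` along the curve
`(y₁, y₂, y₃) = (s², s, s)` as `s → ∞`. -/
theorem stmt_10 :
    Filter.Tendsto (fun s : ℝ => stuScalar (s ^ 2) s s) Filter.atTop Filter.atTop := by
  have hdeg : stuCurveDen.degree < stuCurveNum.degree :=
    degree_lt_degree (by rw [natDegree_stuCurveNum, natDegree_stuCurveDen]; norm_num)
  have hlead : 0 < stuCurveNum.leadingCoeff / stuCurveDen.leadingCoeff := by
    rw [leadingCoeff_stuCurveNum, leadingCoeff_stuCurveDen]
    norm_num
  refine (div_tendsto_atTop_of_degree_gt' _ _ hdeg hlead).congr' ?_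
  filter_upwards [eventually_gt_atTop 0] with s hs
  exact (stuScalar_sq_self_self hs.ne').symm
end

section
/- Let f(y_1, y_2, y_3) = y_1³ + y_2(a y_2² + 3b y_2 y_3 + 3c y_3²) with real coefficients a, b, c. Define G_{ij} = (∂f/∂y_i)(∂f/∂y_j) - f ∂²f/∂y_i∂y_j, B = adj(G) (the adjugate/cofactor matrix), and C_{pq} = f_{11p} f_{11q} where f_{ijk} are the third partial derivatives of f. Then tr(B·C) is a nonzero constant multiple of ((b² - ac) y_2² + b c y_2 y_3 + c² y_3²)(f - 3y_1³) f, identically as polynomials in y_1, y_2, y_3. -/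
/-!
Only `f₁₁₁ = 6` among the `f₁₁ₚ` is nonzero, so `tr(B·C) = 36 B₁₁`, the cofactor of the
`(y₂, y₃)`-block of `G`. Since `g = f - y₁³` does not involve `y₁`, that block is
`gᵢgⱼ - f gᵢⱼ`, a rank-one perturbation of `-f ∇²g` whose determinant is
`f (f Hess(g) + BHess(g))` with `BHess` the bordered Hessian. For a binary cubic,
`2 BHess(g) = -3 g Hess(g)` and `Hess(g) = -36 Q` with `Q` the quadratic factor, so
`36 B₁₁ = 648 Q (f - 3y₁³) f`.
-/

open MvPolynomial Matrix

@[simp]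
theorem MvPolynomial.pderiv_ofNat {σ R : Type*} [CommSemiring R] (i : σ) (n : ℕ) [n.AtLeastTwo] :
    pderiv i (ofNat(n) : MvPolynomial σ R) = 0 := by
  rw [← map_ofNat C n]
  exact pderiv_C

theorem Matrix.adjugate_fin_three_apply_zero_zero {α : Type*} [CommRing α]
    (A : Matrix (Fin 3) (Fin 3) α) : A.adjugate 0 0 = A 1 1 * A 2 2 - A 1 2 * A 2 1 := by
  simp [adjugate_fin_three]

section Hessian

variable {σ R : Type*} [CommRing R]

noncomputable def hessianDet (p : MvPolynomial σ R) (i j : σ) : MvPolynomial σ R :=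
  pderiv i (pderiv i p) * pderiv j (pderiv j p) - pderiv i (pderiv j p) * pderiv j (pderiv i p)

/-- The determinant of `!![0, pᵢ, pⱼ; pᵢ, pᵢᵢ, pᵢⱼ; pⱼ, pⱼᵢ, pⱼⱼ]`. -/
noncomputable def borderedHessianDet (p : MvPolynomial σ R) (i j : σ) : MvPolynomial σ R :=
  -(pderiv i p ^ 2 * pderiv j (pderiv j p)
    - pderiv i p * pderiv j p * (pderiv i (pderiv j p) + pderiv j (pderiv i p))
    + pderiv j p ^ 2 * pderiv i (pderiv i p))

theorem det_two_outer_sub_mul_hessian (p f : MvPolynomial σ R) (i j : σ) :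
    (pderiv i p * pderiv i p - f * pderiv i (pderiv i p)) *
        (pderiv j p * pderiv j p - f * pderiv j (pderiv j p)) -
      (pderiv i p * pderiv j p - f * pderiv i (pderiv j p)) *
        (pderiv j p * pderiv i p - f * pderiv j (pderiv i p)) =
      f * (f * hessianDet p i j + borderedHessianDet p i j) := by
  rw [hessianDet, borderedHessianDet]
  ring

end Hessian

section BinaryCubic

variable {R : Type*} [CommRing R] (a b c : R)

noncomputable def binaryCubic : MvPolynomial (Fin 3) R :=
  X 1 * (C a * X 1 ^ 2 + C 3 * C b * X 1 * X 2 + C 3 * C c * X 2 ^ 2)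

/-- Minus the classical Hessian covariant `(ac - b²) y₂² + (ad - bc) y₂y₃ + (bd - c²) y₃²` of the
binary cubic `(a, b, c, d)`, at `d = 0`. -/
noncomputable def binaryCubicCovariant : MvPolynomial (Fin 3) R :=
  C (b ^ 2 - a * c) * X 1 ^ 2 + C (b * c) * X 1 * X 2 + C (c ^ 2) * X 2 ^ 2

local notation "g" => binaryCubic a b c

theorem pderiv_zero_binaryCubic : pderiv 0 g = 0 := by
  simp [binaryCubic, map_ofNat]

theorem pderiv_one_binaryCubic :
    pderiv 1 g = 3 * (C a * X 1 ^ 2 + 2 * C b * X 1 * X 2 + C c * X 2 ^ 2) := by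
  simp [binaryCubic, map_ofNat]
  ring

theorem pderiv_two_binaryCubic : pderiv 2 g = 3 * (C b * X 1 ^ 2 + 2 * C c * X 1 * X 2) := by
  simp [binaryCubic, map_ofNat]
  ring

theorem pderiv_one_pderiv_one_binaryCubic :
    pderiv 1 (pderiv 1 g) = 6 * (C a * X 1 + C b * X 2) := by
  simp [pderiv_one_binaryCubic]
  ring

theorem pderiv_one_pderiv_two_binaryCubic :
    pderiv 1 (pderiv 2 g) = 6 * (C b * X 1 + C c * X 2) := by
  simp [pderiv_two_binaryCubic]
  ring

theorem pderiv_two_pderiv_one_binaryCubic :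
    pderiv 2 (pderiv 1 g) = 6 * (C b * X 1 + C c * X 2) := by
  simp [pderiv_one_binaryCubic]
  ring

theorem pderiv_two_pderiv_two_binaryCubic : pderiv 2 (pderiv 2 g) = 6 * C c * X 1 := by
  simp [pderiv_two_binaryCubic]
  ring

theorem hessianDet_binaryCubic :
    hessianDet g 1 2 = -36 * binaryCubicCovariant a b c := by
  rw [hessianDet, pderiv_one_pderiv_one_binaryCubic, pderiv_one_pderiv_two_binaryCubic,
    pderiv_two_pderiv_one_binaryCubic, pderiv_two_pderiv_two_binaryCubic, binaryCubicCovariant]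
  simp only [map_sub, map_mul, map_pow]
  ring

/-- The case `n = 3` of `(n - 1) • borderedHessianDet p = -n • p * hessianDet p` for binary forms
of degree `n`, a consequence of Euler's formula. -/
theorem two_mul_borderedHessianDet_binaryCubic :
    2 * borderedHessianDet g 1 2 = -3 * g * hessianDet g 1 2 := by
  rw [borderedHessianDet, hessianDet, pderiv_one_pderiv_one_binaryCubic,
    pderiv_one_pderiv_two_binaryCubic, pderiv_two_pderiv_one_binaryCubic,
    pderiv_two_pderiv_two_binaryCubic, pderiv_one_binaryCubic, pderiv_two_binaryCubic, binaryCubic]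
  simp only [map_ofNat]
  ring

end BinaryCubic

/-- for `f = y₁³ + y₂(a y₂² + 3b y₂y₃ + 3c y₃²)`, with
`G_{ij} = ∂_i f ∂_j f - f ∂_i∂_j f`, `B = adj(G)` and `C_{pq} = f_{11p} f_{11q}` (third
partials), `tr(B·C)` is a nonzero constant multiple of
`((b² - ac) y₂² + bc y₂y₃ + c² y₃²)(f - 3y₁³) f`. -/
theorem stmt_12 (a b c : ℝ) :
    let f : MvPolynomial (Fin 3) ℝ :=
      X 0 ^ 3 + X 1 * (C a * X 1 ^ 2 + C 3 * C b * X 1 * X 2 + C 3 * C c * X 2 ^ 2)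
    let G : Matrix (Fin 3) (Fin 3) (MvPolynomial (Fin 3) ℝ) :=
      Matrix.of fun i j => pderiv i f * pderiv j f - f * pderiv i (pderiv j f)
    let B := G.adjugate
    let Cm : Matrix (Fin 3) (Fin 3) (MvPolynomial (Fin 3) ℝ) :=
      Matrix.of fun p q =>
        pderiv 0 (pderiv 0 (pderiv p f)) * pderiv 0 (pderiv 0 (pderiv q f))
    ∃ k : ℝ, k ≠ 0 ∧
      Matrix.trace (B * Cm)
        = C k * ((C (b ^ 2 - a * c) * X 1 ^ 2 + C (b * c) * X 1 * X 2 + C (c ^ 2) * X 2 ^ 2)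
            * (f - C 3 * X 0 ^ 3) * f) := by
  intro f G B Cm
  have hf : f = X 0 ^ 3 + binaryCubic a b c := rfl
  have hCm : Cm = single 0 0 36 := by
    ext p q : 1
    fin_cases p <;> fin_cases q <;>
      simp [Cm, hf, pderiv_zero_binaryCubic, pderiv_one_binaryCubic, pderiv_two_binaryCubic,
        single]
    norm_num
  have hG : ∀ i j, i ≠ 0 → j ≠ 0 →
      G i j = pderiv i (binaryCubic a b c) * pderiv j (binaryCubic a b c) -
        f * pderiv i (pderiv j (binaryCubic a b c)) := by
    intro i j hi hj
    simp [G, hf, hi.symm, hj.symm]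
  have htrace : trace (B * Cm) = 36 * (f * (f * hessianDet (binaryCubic a b c) 1 2 +
      borderedHessianDet (binaryCubic a b c) 1 2)) := by
    rw [hCm, trace_mul_single, op_smul_eq_mul]
    show G.adjugate 0 0 * 36 = _
    rw [adjugate_fin_three_apply_zero_zero, hG 1 1 (by decide) (by decide),
      hG 1 2 (by decide) (by decide), hG 2 1 (by decide) (by decide),
      hG 2 2 (by decide) (by decide), det_two_outer_sub_mul_hessian,
      mul_comm]
  refine ⟨648, by norm_num, ?_⟩
  rw [htrace, hf, ← binaryCubicCovariant]
  simp only [map_ofNat]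
  linear_combination
    18 * (X 0 ^ 3 + binaryCubic a b c) * two_mul_borderedHessianDet_binaryCubic a b c +
      18 * (X 0 ^ 3 + binaryCubic a b c) * (2 * X 0 ^ 3 - binaryCubic a b c) *
        hessianDet_binaryCubic a b c
end

section
/- For the cubic f = 50y_1³ + 30y_1²y_2 + 6y_1y_2² + 240y_1²y_3 + 96y_1y_2y_3 + 9y_2²y_3 + 384y_1y_3² + 75y_2y_3² + 203y_3³ (the topological cubic form of a resolution of V_16 ⊂ P(1,1,1,5,8)), the Hessian determinant det(∂²f/∂y_i∂y_j) vanishes identically on the hyperplane y_2 = 0, while f restricted to y_2 = 0 equals 50y_1³ + 240y_1²y_3 + 384y_1y_3² + 203y_3³, which is strictly positive for (y_1, y_3) in the closed positive quadrant minus the origin. -/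
/-! With `v = (1, 3, -1)` one finds `∂_v f = -3 y₂²`. Since the Hessian `H` of `f` satisfies
`H v = ∇(∂_v f) = (0, -6 y₂, 0)`, the vector `v` lies in the kernel of `H` along `y₂ = 0`,
so the Hessian determinant vanishes there. -/

open MvPolynomial Matrix

noncomputable section

section Hessian

variable {σ R : Type*} [Fintype σ] [CommSemiring R]

def hessian (f : MvPolynomial σ R) : Matrix σ σ (MvPolynomial σ R) :=
  of fun i j => pderiv i (pderiv j f)

def directionalDeriv (v : σ → R) (f : MvPolynomial σ R) : MvPolynomial σ R :=
  ∑ j, C (v j) * pderiv j f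

theorem hessian_mulVec_C (f : MvPolynomial σ R) (v : σ → R) :
    hessian f *ᵥ (fun j => C (v j)) = fun i => pderiv i (directionalDeriv v f) := by
  ext1 i
  simp only [mulVec, dotProduct, hessian, of_apply, directionalDeriv, map_sum,
    pderiv_C_mul, mul_comm]

end Hessian

theorem det_hessian_map_eq_zero {σ R S : Type*} [Fintype σ] [DecidableEq σ] [CommRing R]
    [CommRing S] [IsDomain S] [Algebra R S] [FaithfulSMul R S] (φ : MvPolynomial σ R →ₐ[R] S)
    (f : MvPolynomial σ R) {v : σ → R} (hv : v ≠ 0)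
    (hφ : ∀ i, φ (pderiv i (directionalDeriv v f)) = 0) :
    φ (hessian f).det = 0 := by
  rw [AlgHom.map_det, AlgHom.mapMatrix_apply, ← exists_mulVec_eq_zero_iff]
  refine ⟨algebraMap R S ∘ v, ?_, ?_⟩
  · exact (FaithfulSMul.algebraMap_injective R S).comp_left.ne_iff'
      (funext fun _ => map_zero _) |>.mpr hv
  · ext1 i
    have := RingHom.map_mulVec (φ : MvPolynomial σ R →+* S) (hessian f) (fun j => C (v j)) i
    simpa [hessian_mulVec_C, hφ, Function.comp_def] using this.symm

def cubicForm : MvPolynomial (Fin 3) ℝ :=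
  C 50 * X 0 ^ 3 + C 30 * X 0 ^ 2 * X 1 + C 6 * X 0 * X 1 ^ 2 + C 240 * X 0 ^ 2 * X 2
    + C 96 * X 0 * X 1 * X 2 + C 9 * X 1 ^ 2 * X 2 + C 384 * X 0 * X 2 ^ 2
    + C 75 * X 1 * X 2 ^ 2 + C 203 * X 2 ^ 3

def restrictY₂Zero : MvPolynomial (Fin 3) ℝ →ₐ[ℝ] MvPolynomial (Fin 3) ℝ :=
  aeval fun i => if i = 1 then 0 else X i

theorem directionalDeriv_cubicForm :
    directionalDeriv ![1, 3, -1] cubicForm = C (-3) * X 1 ^ 2 := by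
  simp only [directionalDeriv, cubicForm, Fin.sum_univ_three, map_add, Derivation.leibniz,
    Derivation.leibniz_pow, pderiv_X, derivation_C, smul_eq_mul, nsmul_eq_mul]
  simp only [cons_val_zero, cons_val_one, cons_val_two, tail_cons, head_cons, Pi.single_apply,
    Fin.reduceEq, if_true, if_false, C_1, C_neg, map_ofNat C, Nat.cast_ofNat]
  ring

theorem restrictY₂Zero_pderiv_directionalDeriv_cubicForm (i : Fin 3) :
    restrictY₂Zero (pderiv i (directionalDeriv ![1, 3, -1] cubicForm)) = 0 := by
  simp [directionalDeriv_cubicForm, restrictY₂Zero]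

theorem restrictY₂Zero_cubicForm :
    restrictY₂Zero cubicForm
      = C 50 * X 0 ^ 3 + C 240 * X 0 ^ 2 * X 2 + C 384 * X 0 * X 2 ^ 2 + C 203 * X 2 ^ 3 := by
  simp [restrictY₂Zero, cubicForm]

theorem cubic_pos_of_nonneg {y₁ y₃ : ℝ} (h₁ : 0 ≤ y₁) (h₃ : 0 ≤ y₃)
    (hne : ¬(y₁ = 0 ∧ y₃ = 0)) :
    0 < 50 * y₁ ^ 3 + 240 * y₁ ^ 2 * y₃ + 384 * y₁ * y₃ ^ 2 + 203 * y₃ ^ 3 := by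
  rcases h₁.eq_or_lt with rfl | h₁
  · have h₃ : 0 < y₃ := h₃.lt_of_ne' fun h => hne ⟨rfl, h⟩
    positivity
  · positivity

end

/-- for the topological cubic form
`f = 50y₁³ + 30y₁²y₂ + 6y₁y₂² + 240y₁²y₃ + 96y₁y₂y₃ + 9y₂²y₃ + 384y₁y₃² + 75y₂y₃² + 203y₃³`
of a resolution of `V₁₆ ⊂ P(1,1,1,5,8)`: the Hessian determinant vanishes identically on the
hyperplane `y₂ = 0`; `f` restricted to `y₂ = 0` equals `50y₁³ + 240y₁²y₃ + 384y₁y₃² + 203y₃³`,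
which is strictly positive on the punctured closed positive quadrant. -/
theorem stmt_14 :
    let f : MvPolynomial (Fin 3) ℝ :=
      C 50 * X 0 ^ 3 + C 30 * X 0 ^ 2 * X 1 + C 6 * X 0 * X 1 ^ 2 + C 240 * X 0 ^ 2 * X 2
        + C 96 * X 0 * X 1 * X 2 + C 9 * X 1 ^ 2 * X 2 + C 384 * X 0 * X 2 ^ 2
        + C 75 * X 1 * X 2 ^ 2 + C 203 * X 2 ^ 3
    let Hdet := (Matrix.of fun i j : Fin 3 => pderiv i (pderiv j f)).det
    let restrict : MvPolynomial (Fin 3) ℝ → MvPolynomial (Fin 3) ℝ :=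
      fun p => aeval (fun i : Fin 3 => if i = 1 then 0 else X i) p
    restrict Hdet = 0 ∧
      restrict f = C 50 * X 0 ^ 3 + C 240 * X 0 ^ 2 * X 2 + C 384 * X 0 * X 2 ^ 2
          + C 203 * X 2 ^ 3 ∧
      (∀ y₁ y₃ : ℝ, 0 ≤ y₁ → 0 ≤ y₃ → ¬(y₁ = 0 ∧ y₃ = 0) →
        0 < 50 * y₁ ^ 3 + 240 * y₁ ^ 2 * y₃ + 384 * y₁ * y₃ ^ 2 + 203 * y₃ ^ 3) :=
  ⟨det_hessian_map_eq_zero restrictY₂Zero cubicForm (v := ![1, 3, -1]) (by simp)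
      restrictY₂Zero_pderiv_directionalDeriv_cubicForm,
    restrictY₂Zero_cubicForm, fun _ _ => cubic_pos_of_nonneg⟩
end
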